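/- arXiv:2603.24451 — 6 statements merged into one kernel-verified Lean document; each statement's English description precedes it below -/
import Mathlib

section
/- Let H be a real inner product space, f : H → H contractive, and suppose ‖f(z) - f(y)‖ ≤ L·‖z - y‖ for all z, y. Consider the implicit midpoint rule with exact stage z⁽¹⁾ = zₙ + (Δt/2)·f(z⁽¹⁾), z_{n+1} = zₙ + Δt·f(z⁽¹⁾), and the perturbed stage y⁽¹⁾ = yₙ + (Δt/2)·f_ε(y⁽¹⁾), y_{n+1} = yₙ + Δt·f(y⁽¹⁾), where ‖f(y⁽¹⁾) - f_ε(y⁽¹⁾)‖ ≤ ε₁. Then ‖z⁽¹⁾ - y⁽¹⁾‖ ≤ ‖zₙ - yₙ‖ + (Δt/2)·ε₁. -/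
open scoped RealInnerProductSpace

theorem norm_le_norm_sub_of_inner_nonpos {E : Type*} [NormedAddCommGroup E]
    [InnerProductSpace ℝ E] {x y : E} (h : ⟪x, y⟫ ≤ 0) : ‖x‖ ≤ ‖x - y‖ := by
  have hsq : ‖x‖ ^ 2 ≤ ‖x - y‖ ^ 2 := by
    rw [norm_sub_sq_real]
    linarith [sq_nonneg ‖y‖]
  exact (pow_le_pow_iff_left₀ (norm_nonneg _) (norm_nonneg _) two_ne_zero).mp hsq

theorem imr_stage_error_bound_general
    {H : Type*} [NormedAddCommGroup H] [InnerProductSpace ℝ H]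
    (f fε : H → H) (hf : ∀ x y : H, ⟪x - y, f x - f y⟫ ≤ 0)
    (Δt : ℝ) (hΔt : 0 < Δt) (ε₁ : ℝ)
    (zn yn z1 y1 : H)
    (hz1 : z1 = zn + (Δt / 2) • f z1)
    (hy1 : y1 = yn + (Δt / 2) • fε y1)
    (hε : ‖f y1 - fε y1‖ ≤ ε₁) :
    ‖z1 - y1‖ ≤ ‖zn - yn‖ + (Δt / 2) * ε₁ := by
  have hdissip : ⟪z1 - y1, (Δt / 2) • (f z1 - f y1)⟫ ≤ 0 := by
    rw [real_inner_smul_right]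
    exact mul_nonpos_of_nonneg_of_nonpos (by positivity) (hf z1 y1)
  have hsplit : z1 - y1 - (Δt / 2) • (f z1 - f y1) = zn - yn + (Δt / 2) • (f y1 - fε y1) := by
    nth_rewrite 1 [hz1, hy1]
    module
  calc ‖z1 - y1‖ ≤ ‖z1 - y1 - (Δt / 2) • (f z1 - f y1)‖ :=
        norm_le_norm_sub_of_inner_nonpos hdissip
    _ = ‖zn - yn + (Δt / 2) • (f y1 - fε y1)‖ := by rw [hsplit]
    _ ≤ ‖zn - yn‖ + (Δt / 2) * ε₁ := by
        refine norm_add_le_of_le le_rfl ?_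
        rw [norm_smul, Real.norm_of_nonneg (by positivity)]
        gcongr

theorem imr_stage_error_bound
    {H : Type*} [NormedAddCommGroup H] [InnerProductSpace ℝ H]
    (f fε : H → H) (hf : ∀ x y : H, ⟪x - y, f x - f y⟫ ≤ 0)
    (L : ℝ) (hLip : ∀ z y : H, ‖f z - f y‖ ≤ L * ‖z - y‖)
    (Δt : ℝ) (hΔt : 0 < Δt) (ε₁ : ℝ)
    (zn yn z1 y1 zn1 yn1 : H)
    (hz1 : z1 = zn + (Δt / 2) • f z1)
    (hzn1 : zn1 = zn + Δt • f z1)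
    (hy1 : y1 = yn + (Δt / 2) • fε y1)
    (hyn1 : yn1 = yn + Δt • f y1)
    (hε : ‖f y1 - fε y1‖ ≤ ε₁) :
    ‖z1 - y1‖ ≤ ‖zn - yn‖ + (Δt / 2) * ε₁ :=
  imr_stage_error_bound_general f fε hf Δt hΔt ε₁ zn yn z1 y1 hz1 hy1 hε
end

section
/- Under the hypotheses of the implicit midpoint rule error lemma (contractive L-Lipschitz f, stage perturbation bounded by ε₁), the one-step error growth satisfies ‖z_{n+1} - y_{n+1}‖² ≤ ‖zₙ - yₙ‖² + Δt²·L·ε₁·(‖zₙ - yₙ‖ + (Δt/2)·ε₁), and consequently ‖z_{n+1} - y_{n+1}‖ ≤ ‖zₙ - yₙ‖ + (1/2)·ε₁·Δt²·L + ε₁·Δt·√(Δt·L/2). -/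
open scoped RealInnerProductSpace

theorem imr_one_step_error_growth
    {H : Type*} [NormedAddCommGroup H] [InnerProductSpace ℝ H]
    (f fε : H → H) (hf : ∀ x y : H, ⟪x - y, f x - f y⟫ ≤ 0)
    (L : ℝ) (hL : 0 ≤ L) (hLip : ∀ z y : H, ‖f z - f y‖ ≤ L * ‖z - y‖)
    (Δt : ℝ) (hΔt : 0 ≤ Δt) (ε₁ : ℝ) (hε₁ : 0 ≤ ε₁)
    (zn yn z1 y1 zn1 yn1 : H)
    (hz1 : z1 = zn + (Δt / 2) • f z1)
    (hzn1 : zn1 = zn + Δt • f z1)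
    (hy1 : y1 = yn + (Δt / 2) • fε y1)
    (hyn1 : yn1 = yn + Δt • f y1)
    (hε : ‖f y1 - fε y1‖ ≤ ε₁) :
    ‖zn1 - yn1‖ ^ 2 ≤ ‖zn - yn‖ ^ 2 + Δt ^ 2 * L * ε₁ * (‖zn - yn‖ + (Δt / 2) * ε₁) ∧
      ‖zn1 - yn1‖ ≤ ‖zn - yn‖ + (1 / 2) * ε₁ * Δt ^ 2 * L + ε₁ * Δt * Real.sqrt (Δt * L / 2) := by
  set e := zn - yn with he
  set d := z1 - y1 with hdd
  set g := f z1 - f y1 with hg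
  set w := f y1 - fε y1 with hw
  have hde : d = e + (Δt / 2) • g + (Δt / 2) • w := by
    rw [hdd]
    conv_lhs => rw [hz1, hy1]
    rw [he, hg, hw]; module
  have hz : zn1 - yn1 = e + Δt • g := by
    rw [hzn1, hyn1, he, hg]; module
  have hcontr : ⟪d, g⟫ ≤ 0 := hf z1 y1
  have hgd : ‖g‖ ≤ L * ‖d‖ := hLip z1 y1
  have hwg : |⟪w, g⟫| ≤ ‖w‖ * ‖g‖ := abs_real_inner_le_norm w g
  -- bound on ‖d‖
  have hd2 : ‖d‖ * ‖d‖ ≤ ‖d‖ * (‖e‖ + (Δt / 2) * ε₁) := by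
    have h1 : ‖d‖ * ‖d‖ = ⟪d, d⟫ := (real_inner_self_eq_norm_mul_norm d).symm
    have h2 : ⟪d, d⟫ = ⟪d, e⟫ + (Δt / 2) * ⟪d, g⟫ + (Δt / 2) * ⟪d, w⟫ := by
      have h2a : (⟪d, d⟫ : ℝ) = ⟪d, e + (Δt / 2) • g + (Δt / 2) • w⟫ := by rw [← hde]
      rw [h2a, inner_add_right, inner_add_right, real_inner_smul_right, real_inner_smul_right]
    have h3 : ⟪d, e⟫ ≤ ‖d‖ * ‖e‖ := real_inner_le_norm d e
    have h4 : ⟪d, w⟫ ≤ ‖d‖ * ‖w‖ := real_inner_le_norm d w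
    have h5 : ‖d‖ * ‖w‖ ≤ ‖d‖ * ε₁ := by
      exact mul_le_mul_of_nonneg_left hε (norm_nonneg d)
    nlinarith [norm_nonneg d, hΔt]
  have hdle : ‖d‖ ≤ ‖e‖ + (Δt / 2) * ε₁ := by
    rcases (norm_nonneg d).lt_or_eq with h | h
    · exact le_of_mul_le_mul_left hd2 h
    · rw [← h]; positivity
  -- expand the square of the new error
  have key : ‖zn1 - yn1‖ ^ 2 = ‖e‖ ^ 2 + 2 * Δt * ⟪d, g⟫ - Δt ^ 2 * ⟪w, g⟫ := by
    rw [hz]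
    have h1 : ‖e + Δt • g‖ ^ 2 = ‖e‖ ^ 2 + 2 * (Δt * ⟪e, g⟫) + Δt ^ 2 * ‖g‖ ^ 2 := by
      rw [norm_add_sq_real, real_inner_smul_right, norm_smul, Real.norm_eq_abs,
        abs_of_nonneg hΔt, mul_pow]
    have h2 : ⟪e, g⟫ = ⟪d, g⟫ - (Δt / 2) * ⟪g, g⟫ - (Δt / 2) * ⟪w, g⟫ := by
      have : e = d - (Δt / 2) • g - (Δt / 2) • w := by rw [hde]; module
      rw [this, inner_sub_left, inner_sub_left, real_inner_smul_left, real_inner_smul_left]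
    have h3 : ⟪g, g⟫ = ‖g‖ ^ 2 := real_inner_self_eq_norm_sq g
    rw [h1, h2, h3]; ring
  have hwnorm : ‖w‖ ≤ ε₁ := hε
  have hgbound : ‖g‖ ≤ L * (‖e‖ + (Δt / 2) * ε₁) := by
    calc ‖g‖ ≤ L * ‖d‖ := hgd
    _ ≤ L * (‖e‖ + (Δt / 2) * ε₁) := mul_le_mul_of_nonneg_left hdle hL
  have part1 : ‖zn1 - yn1‖ ^ 2 ≤ ‖e‖ ^ 2 + Δt ^ 2 * L * ε₁ * (‖e‖ + (Δt / 2) * ε₁) := by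
    rw [key]
    have hwg' : -⟪w, g⟫ ≤ ε₁ * ‖g‖ := by
      have := (abs_le.mp hwg).1
      have h5 : ‖w‖ * ‖g‖ ≤ ε₁ * ‖g‖ := mul_le_mul_of_nonneg_right hwnorm (norm_nonneg g)
      linarith
    have h6 : Δt ^ 2 * (-⟪w, g⟫) ≤ Δt ^ 2 * (ε₁ * ‖g‖) :=
      mul_le_mul_of_nonneg_left hwg' (by positivity)
    have h7 : Δt ^ 2 * (ε₁ * ‖g‖) ≤ Δt ^ 2 * (ε₁ * (L * (‖e‖ + (Δt / 2) * ε₁))) := by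
      have := mul_le_mul_of_nonneg_left hgbound hε₁
      exact mul_le_mul_of_nonneg_left this (by positivity)
    nlinarith [mul_le_mul_of_nonneg_left hcontr hΔt]
  refine ⟨part1, ?_⟩
  set s := Real.sqrt (Δt * L / 2) with hs
  have hs0 : 0 ≤ s := Real.sqrt_nonneg _
  have hs2 : s ^ 2 = Δt * L / 2 := Real.sq_sqrt (by positivity)
  set R := ‖e‖ + (1 / 2) * ε₁ * Δt ^ 2 * L + ε₁ * Δt * s with hR
  have hR0 : 0 ≤ R := by positivity
  have hsq : ‖zn1 - yn1‖ ^ 2 ≤ R ^ 2 := by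
    have hc2 : (ε₁ * Δt * s) ^ 2 = Δt ^ 2 * L * ε₁ * ((Δt / 2) * ε₁) := by
      rw [mul_pow, hs2]; ring
    have hexp : R ^ 2 = ‖e‖ ^ 2 + Δt ^ 2 * L * ε₁ * ‖e‖ + (ε₁ * Δt * s) ^ 2
        + (((1 / 2) * ε₁ * Δt ^ 2 * L) ^ 2 + 2 * ‖e‖ * (ε₁ * Δt * s)
          + 2 * ((1 / 2) * ε₁ * Δt ^ 2 * L) * (ε₁ * Δt * s)) := by rw [hR]; ring
    have nn : 0 ≤ ((1 / 2) * ε₁ * Δt ^ 2 * L) ^ 2 + 2 * ‖e‖ * (ε₁ * Δt * s)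
        + 2 * ((1 / 2) * ε₁ * Δt ^ 2 * L) * (ε₁ * Δt * s) := by positivity
    have hmul : Δt ^ 2 * L * ε₁ * (‖e‖ + (Δt / 2) * ε₁)
        = Δt ^ 2 * L * ε₁ * ‖e‖ + Δt ^ 2 * L * ε₁ * ((Δt / 2) * ε₁) := by ring
    rw [hexp, hc2]
    linarith [part1, hmul]
  calc ‖zn1 - yn1‖ = Real.sqrt (‖zn1 - yn1‖ ^ 2) := (Real.sqrt_sq (norm_nonneg _)).symm
  _ ≤ Real.sqrt (R ^ 2) := Real.sqrt_le_sqrt hsq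
  _ = R := Real.sqrt_sq hR0
end

section
/- Under the implicit midpoint rule hypotheses with stage perturbation bounded by ε₁, if additionally Δt ≥ 2/L, then ‖z_{n+1} - y_{n+1}‖ ≤ ‖zₙ - yₙ‖ + (1/2)·ε₁·Δt²·L. -/
open scoped RealInnerProductSpace

set_option maxHeartbeats 1000000 in
theorem imr_one_step_error_growth_large_step
    {H : Type*} [NormedAddCommGroup H] [InnerProductSpace ℝ H]
    (f fε : H → H) (hf : ∀ x y : H, ⟪x - y, f x - f y⟫ ≤ 0)
    (L : ℝ) (hL : 0 < L) (hLip : ∀ z y : H, ‖f z - f y‖ ≤ L * ‖z - y‖)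
    (Δt : ℝ) (hΔt : 0 < Δt) (ε₁ : ℝ) (hε₁ : 0 ≤ ε₁)
    (hbig : 2 / L ≤ Δt)
    (zn yn z1 y1 zn1 yn1 : H)
    (hz1 : z1 = zn + (Δt / 2) • f z1)
    (hzn1 : zn1 = zn + Δt • f z1)
    (hy1 : y1 = yn + (Δt / 2) • fε y1)
    (hyn1 : yn1 = yn + Δt • f y1)
    (hε : ‖f y1 - fε y1‖ ≤ ε₁) :
    ‖zn1 - yn1‖ ≤ ‖zn - yn‖ + (1 / 2) * ε₁ * Δt ^ 2 * L := by
  have hbig' : 2 ≤ Δt * L := by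
    rw [div_le_iff₀ hL] at hbig; linarith
  set b := zn - yn with hb
  set F := f z1 - f y1 with hFdef
  set δ := f y1 - fε y1 with hδdef
  have hw : z1 - y1 = b + (Δt / 2) • F + (Δt / 2) • δ := by
    rw [hz1, hy1]
    simp only [hb, hFdef, hδdef, smul_sub]
    abel
  have hmono : ⟪z1 - y1, F⟫ ≤ 0 := hf z1 y1
  have hFn : ‖F‖ ≤ L * ‖z1 - y1‖ := hLip z1 y1
  -- bound on the stage difference
  have hwsq : ‖z1 - y1‖ ^ 2 ≤ ‖z1 - y1‖ * (‖b‖ + Δt / 2 * ε₁) := by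
    have h1 : (‖z1 - y1‖ : ℝ) ^ 2 = ⟪z1 - y1, z1 - y1⟫ :=
      (real_inner_self_eq_norm_sq _).symm
    have h2 : ⟪z1 - y1, z1 - y1⟫
        = ⟪z1 - y1, b⟫ + (Δt / 2) * ⟪z1 - y1, F⟫ + (Δt / 2) * ⟪z1 - y1, δ⟫ := by
      nth_rewrite 2 [hw]
      rw [inner_add_right, inner_add_right, real_inner_smul_right, real_inner_smul_right]
    have h3 : ⟪z1 - y1, b⟫ ≤ ‖z1 - y1‖ * ‖b‖ := real_inner_le_norm _ _
    have h4 : ⟪z1 - y1, δ⟫ ≤ ‖z1 - y1‖ * ε₁ :=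
      (real_inner_le_norm _ _).trans (mul_le_mul_of_nonneg_left hε (norm_nonneg _))
    nlinarith [hmono, hΔt.le]
  have hC : (0:ℝ) ≤ ‖b‖ + Δt / 2 * ε₁ := by positivity
  have hwle : ‖z1 - y1‖ ≤ ‖b‖ + Δt / 2 * ε₁ := by
    nlinarith [norm_nonneg (z1 - y1), hwsq, hC]
  have h3 : ‖F‖ ≤ L * (‖b‖ + Δt / 2 * ε₁) :=
    hFn.trans (mul_le_mul_of_nonneg_left hwle hL.le)
  -- inner product bound
  have hinner : ⟪b, F⟫ ≤ -(Δt / 2) * ‖F‖ ^ 2 + (Δt / 2) * (ε₁ * ‖F‖) := by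
    have h5 : ⟪b, F⟫ + (Δt / 2) * ⟪F, F⟫ + (Δt / 2) * ⟪δ, F⟫ ≤ 0 := by
      rw [hw] at hmono
      rwa [inner_add_left, inner_add_left, real_inner_smul_left, real_inner_smul_left] at hmono
    have h6 : ⟪F, F⟫ = ‖F‖ ^ 2 := real_inner_self_eq_norm_sq _
    have h7 : -(ε₁ * ‖F‖) ≤ ⟪δ, F⟫ := by
      have := abs_real_inner_le_norm δ F
      have h8 : ‖δ‖ * ‖F‖ ≤ ε₁ * ‖F‖ := mul_le_mul_of_nonneg_right hε (norm_nonneg _)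
      have := abs_le.mp this
      linarith [this.1]
    nlinarith [hΔt.le]
  -- main square bound
  have hmain : ‖b + Δt • F‖ ^ 2 ≤ ‖b‖ ^ 2 + Δt ^ 2 * (ε₁ * ‖F‖) := by
    have h9 : ‖b + Δt • F‖ ^ 2 = ‖b‖ ^ 2 + 2 * (Δt * ⟪b, F⟫) + Δt ^ 2 * ‖F‖ ^ 2 := by
      rw [norm_add_sq_real, real_inner_smul_right, norm_smul, Real.norm_eq_abs,
        abs_of_pos hΔt, mul_pow]
    nlinarith [hinner, hΔt.le]
  have hzy : zn1 - yn1 = b + Δt • F := by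
    rw [hzn1, hyn1]
    simp only [hb, hFdef, smul_sub]
    abel
  have hR : (0:ℝ) ≤ ‖b‖ + 1 / 2 * ε₁ * Δt ^ 2 * L := by positivity
  rw [hzy]
  have h10 : Δt ^ 2 * (ε₁ * ‖F‖) ≤ Δt ^ 2 * (ε₁ * (L * (‖b‖ + Δt / 2 * ε₁))) :=
    mul_le_mul_of_nonneg_left (mul_le_mul_of_nonneg_left h3 hε₁) (sq_nonneg Δt)
  have hkey : Δt ^ 3 * L * ε₁ ^ 2 / 2 ≤ Δt ^ 4 * L ^ 2 * ε₁ ^ 2 / 4 := by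
    nlinarith [mul_le_mul_of_nonneg_left hbig' (show (0:ℝ) ≤ Δt ^ 3 * L * ε₁ ^ 2 / 4 by positivity)]
  have hfinal : ‖b + Δt • F‖ ^ 2 ≤ (‖b‖ + 1 / 2 * ε₁ * Δt ^ 2 * L) ^ 2 := by
    nlinarith [hmain, h10, hkey, norm_nonneg b]
  have hs := Real.sqrt_le_sqrt hfinal
  rwa [Real.sqrt_sq (norm_nonneg _), Real.sqrt_sq hR] at hs
end

section
/- Under the hypotheses of the stabilized-correction identity, if additionally ‖(I - α·Δt·J)⁻¹·(Q_k - J)·v‖ ≤ ‖v‖ for all vectors v (condition (CorCondition)), then ‖y_{[k+1]} - y‖ ≤ α·Δt·‖y_{[k]} - y‖, so each stabilized correction multiplies the error by a factor of at most α·Δt. -/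
theorem stabilized_correction_error_contraction
    {n : ℕ} (f : (Fin n → ℝ) → (Fin n → ℝ))
    (α Δt : ℝ) (hα : 0 < α) (hΔt : 0 < Δt)
    (J Qk : Matrix (Fin n) (Fin n) ℝ)
    (hJ : IsUnit (1 - (α * Δt) • J))
    (yexp y yk yk1 : Fin n → ℝ)
    (hy : y = yexp + (α * Δt) • f y)
    (hupdate : yk1 = yk + ((1 - (α * Δt) • J)⁻¹).mulVec
        (yexp + (α * Δt) • f yk - yk))
    (hQ : Qk.mulVec (yk - y) = f yk - f y)
    (hcond : ∀ v : Fin n → ℝ,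
      ‖((1 - (α * Δt) • J)⁻¹ * (Qk - J)).mulVec v‖ ≤ ‖v‖) :
    ‖yk1 - y‖ ≤ α * Δt * ‖yk - y‖ := by
  set A : Matrix (Fin n) (Fin n) ℝ := 1 - (α * Δt) • J with hA
  set e : Fin n → ℝ := yk - y with he
  have hinv : A⁻¹ * A = 1 := Matrix.nonsing_inv_mul A (Matrix.isUnit_iff_isUnit_det A |>.mp hJ)
  have hyexp : yexp = y - (α * Δt) • f y := eq_sub_of_add_eq hy.symm
  have harg : yexp + (α * Δt) • f yk - yk = (α * Δt) • Qk.mulVec e - e := by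
    rw [hQ, hyexp, he]
    module
  have hkey : yk1 - y = (α * Δt) • (A⁻¹ * (Qk - J)).mulVec e := by
    have hAe : e = A⁻¹.mulVec (A.mulVec e) := by
      rw [Matrix.mulVec_mulVec, hinv, Matrix.one_mulVec]
    rw [hupdate, harg]
    have h2 : yk + A⁻¹.mulVec ((α * Δt) • Qk.mulVec e - e) - y
        = A⁻¹.mulVec (A.mulVec e) + A⁻¹.mulVec ((α * Δt) • Qk.mulVec e - e) := by
      rw [← hAe]; rw [he]; abel
    have harg2 : A.mulVec e + ((α * Δt) • Qk.mulVec e - e)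
        = (Qk - J).mulVec ((α * Δt) • e) := by
      rw [hA]
      simp only [Matrix.sub_mulVec, Matrix.mulVec_smul, Matrix.smul_mulVec,
        Matrix.one_mulVec]
      module
    rw [h2, ← Matrix.mulVec_add, harg2, Matrix.mulVec_mulVec, Matrix.mulVec_smul]
  rw [hkey, norm_smul]
  have h1 : ‖α * Δt‖ = α * Δt := abs_of_pos (mul_pos hα hΔt)
  rw [h1]
  exact mul_le_mul_of_nonneg_left (hcond e) (le_of_lt (mul_pos hα hΔt))
end

section
/- Let H be a real inner product space, f : H → H contractive and L-Lipschitz, and consider an s-stage DIRK method with coefficients A = (a_{ij}) lower triangular, b = (b_i), satisfying a_{ii} ≥ 0, b_i ≥ 0, and M = B·A + Aᵀ·B - b·bᵀ positive semidefinite (B = diag(b)). Let z⁽ⁱ⁾ be the exact stages (z⁽ⁱ⁾ = zₙ + Δt·∑_{j≤i} a_{ij}·f(z⁽ʲ⁾)) and y⁽ⁱ⁾ the perturbed stages (y⁽ⁱ⁾ = yₙ + Δt·∑_{j<i} a_{ij}·f(y⁽ʲ⁾) + Δt·a_{ii}·f_ε(y⁽ⁱ⁾)), with ‖f(y⁽ⁱ⁾)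 - f_ε(y⁽ⁱ⁾)‖ ≤ εᵢ, and outputs z_{n+1} = zₙ + Δt·∑ᵢ bᵢ·f(z⁽ⁱ⁾), y_{n+1} = yₙ + Δt·∑ᵢ bᵢ·f(y⁽ⁱ⁾). Then ‖z_{n+1} - y_{n+1}‖² ≤ ‖zₙ - yₙ‖² + 2·Δt²·L·∑_{i=1}^{s} εᵢ·bᵢ·a_{ii}·‖z⁽ⁱ⁾ - y⁽ⁱ⁾‖. -/
/-!
With eᵢ = z⁽ⁱ⁾ - y⁽ⁱ⁾, dᵢ = f(z⁽ⁱ⁾) - f(y⁽ⁱ⁾) and the stage residuals rᵢ = aᵢᵢ (f(y⁽ⁱ⁾) - f_ε(y⁽ⁱ⁾)),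
the error equations read eᵢ = e₀ + Δt (∑ⱼ aᵢⱼ dⱼ + rᵢ) and e_{n+1} = e₀ + Δt ∑ᵢ bᵢ dᵢ. Expanding
‖e_{n+1}‖² and eliminating e₀ through the stage equations gives the Burrage–Butcher identity
  ‖e_{n+1}‖² = ‖e₀‖² + 2Δt ∑ bᵢ ⟪eᵢ, dᵢ⟫ - 2Δt² ∑ bᵢ ⟪rᵢ, dᵢ⟫ - Δt² ∑ Mᵢⱼ ⟪dᵢ, dⱼ⟫.
Contractivity makes the second term nonpositive and M ⪰ 0 the last one (a positive semidefinite
matrix pairs nonnegatively with the Gram matrix of the dᵢ); the residual term is bounded by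
Cauchy–Schwarz, ‖f(y⁽ⁱ⁾) - f_ε(y⁽ⁱ⁾)‖ ≤ εᵢ and ‖dᵢ‖ ≤ L ‖eᵢ‖.
-/

open scoped Matrix

open scoped RealInnerProductSpace

open Finset

theorem sum_Iic_smul_eq_sum_of_lowerTriangular {ι M : Type*} [Fintype ι] [LinearOrder ι]
    [LocallyFiniteOrderBot ι] [AddCommMonoid M] [Module ℝ M] {A : Matrix ι ι ℝ}
    (hA : ∀ i j, i < j → A i j = 0) (v : ι → M) (i : ι) :
    ∑ j ∈ Iic i, A i j • v j = ∑ j, A i j • v j :=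
  sum_subset (subset_univ _) fun j _ hj => by
    rw [hA i j (not_le.mp (mem_Iic.not.mp hj)), zero_smul]

section

variable {H : Type*} [NormedAddCommGroup H] [InnerProductSpace ℝ H]

theorem neg_real_inner_le_of_norm_le {x y : H} {a c : ℝ} (hx : ‖x‖ ≤ a) (hy : ‖y‖ ≤ c) :
    -⟪x, y⟫ ≤ a * c :=
  (neg_le_abs _).trans <| (abs_real_inner_le_norm x y).trans <|
    mul_le_mul hx hy (norm_nonneg y) ((norm_nonneg x).trans hx)

variable {ι : Type*} [Fintype ι]

theorem Matrix.PosSemidef.sum_sum_mul_inner_nonneg {M : Matrix ι ι ℝ} (hM : M.PosSemidef)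
    (d : ι → H) : 0 ≤ ∑ i, ∑ j, M i j * ⟪d i, d j⟫ := by
  classical
  obtain ⟨B, rfl⟩ : ∃ B : Matrix ι ι ℝ, M = star B * B := by
    open scoped MatrixOrder in
    exact CStarAlgebra.nonneg_iff_eq_star_mul_self.mp hM.nonneg
  have : ∑ i, ∑ j, (star B * B) i j * ⟪d i, d j⟫ = ∑ k, ‖∑ i, B k i • d i‖ ^ 2 := by
    simp_rw [← real_inner_self_eq_norm_sq, sum_inner, inner_sum, real_inner_smul_left,
      real_inner_smul_right, Matrix.mul_apply, Matrix.star_apply, star_trivial, sum_mul,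
      mul_assoc]
    exact sum_comm_cycle
  rw [this]
  positivity

variable [DecidableEq ι]

def algStabilityMatrix (A : Matrix ι ι ℝ) (b : ι → ℝ) : Matrix ι ι ℝ :=
  Matrix.diagonal b * A + Aᵀ * Matrix.diagonal b - Matrix.vecMulVec b b

theorem sum_sum_algStabilityMatrix_mul_inner (A : Matrix ι ι ℝ) (b : ι → ℝ) (d : ι → H) :
    ∑ i, ∑ j, algStabilityMatrix A b i j * ⟪d i, d j⟫ =
      2 * ∑ i, b i * ⟪∑ j, A i j • d j, d i⟫ - ‖∑ i, b i • d i‖ ^ 2 := by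
  simp only [algStabilityMatrix, Matrix.sub_apply, Matrix.add_apply, Matrix.mul_diagonal,
    Matrix.diagonal_mul, Matrix.transpose_apply, Matrix.vecMulVec_apply, add_mul, sub_mul,
    sum_add_distrib, sum_sub_distrib, ← real_inner_self_eq_norm_sq, sum_inner, inner_sum,
    real_inner_smul_left, real_inner_smul_right]
  rw [sum_comm (f := fun x y => A y x * b y * ⟪d x, d y⟫)]
  simp only [real_inner_comm (d _) (d _), two_mul, mul_sum, sum_add_distrib, mul_assoc,
    mul_left_comm (A _ _) (b _)]

theorem norm_sq_rungeKutta_step_eq (A : Matrix ι ι ℝ) (b : ι → ℝ) (Δt : ℝ) (e₀ : H)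
    (e d r : ι → H) (he : ∀ i, e i = e₀ + Δt • (∑ j, A i j • d j + r i)) :
    ‖e₀ + Δt • ∑ i, b i • d i‖ ^ 2 =
      ‖e₀‖ ^ 2 + 2 * Δt * ∑ i, b i * ⟪e i, d i⟫ - 2 * Δt ^ 2 * ∑ i, b i * ⟪r i, d i⟫ -
        Δt ^ 2 * ∑ i, ∑ j, algStabilityMatrix A b i j * ⟪d i, d j⟫ := by
  have hstages : ∑ i, b i * ⟪e i, d i⟫ = ∑ i, b i * ⟪e₀, d i⟫ +
      Δt * ∑ i, b i * ⟪∑ j, A i j • d j, d i⟫ + Δt * ∑ i, b i * ⟪r i, d i⟫ := by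
    simp only [he, inner_add_left, real_inner_smul_left, mul_add, sum_add_distrib,
      mul_left_comm (b _) Δt, ← mul_sum]
    ring
  have hstep : ‖e₀ + Δt • ∑ i, b i • d i‖ ^ 2 = ‖e₀‖ ^ 2 +
      2 * Δt * ∑ i, b i * ⟪e₀, d i⟫ + Δt ^ 2 * ‖∑ i, b i • d i‖ ^ 2 := by
    rw [norm_add_sq_real, real_inner_smul_right, inner_sum, norm_smul, mul_pow,
      Real.norm_eq_abs, sq_abs]
    simp only [real_inner_smul_right]
    ring
  rw [sum_sum_algStabilityMatrix_mul_inner, hstep, hstages]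
  ring

theorem norm_sq_rungeKutta_step_le {A : Matrix ι ι ℝ} {b : ι → ℝ} (hb : ∀ i, 0 ≤ b i)
    (hM : (algStabilityMatrix A b).PosSemidef) {Δt : ℝ} (hΔt : 0 ≤ Δt) {e₀ : H}
    {e d r : ι → H} (he : ∀ i, e i = e₀ + Δt • (∑ j, A i j • d j + r i))
    (hmono : ∀ i, ⟪e i, d i⟫ ≤ 0) :
    ‖e₀ + Δt • ∑ i, b i • d i‖ ^ 2 ≤ ‖e₀‖ ^ 2 - 2 * Δt ^ 2 * ∑ i, b i * ⟪r i, d i⟫ := by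
  rw [norm_sq_rungeKutta_step_eq A b Δt e₀ e d r he]
  have hdiss : 2 * Δt * ∑ i, b i * ⟪e i, d i⟫ ≤ 0 :=
    mul_nonpos_of_nonneg_of_nonpos (by positivity)
      (sum_nonpos fun i _ => mul_nonpos_of_nonneg_of_nonpos (hb i) (hmono i))
  have hquad : 0 ≤ Δt ^ 2 * ∑ i, ∑ j, algStabilityMatrix A b i j * ⟪d i, d j⟫ :=
    mul_nonneg (sq_nonneg Δt) (hM.sum_sum_mul_inner_nonneg d)
  linarith

end

theorem dirk_perturbed_one_step_bound
    {H : Type*} [NormedAddCommGroup H] [InnerProductSpace ℝ H]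
    {s : ℕ}
    (f fε : H → H) (hf : ∀ x y : H, ⟪x - y, f x - f y⟫ ≤ 0)
    (L : ℝ) (hLip : ∀ x y : H, ‖f x - f y‖ ≤ L * ‖x - y‖)
    (A : Matrix (Fin s) (Fin s) ℝ) (b : Fin s → ℝ)
    (hlow : ∀ i j : Fin s, i < j → A i j = 0)
    (hdiag : ∀ i : Fin s, 0 ≤ A i i)
    (hb : ∀ i : Fin s, 0 ≤ b i)
    (hM : (Matrix.diagonal b * A + Aᵀ * Matrix.diagonal b -
      Matrix.vecMulVec b b).PosSemidef)
    (Δt : ℝ) (hΔt : 0 < Δt)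
    (ε : Fin s → ℝ)
    (zn yn zn1 yn1 : H) (z y : Fin s → H)
    (hz : ∀ i : Fin s, z i = zn + Δt • ∑ j ∈ Finset.Iic i, A i j • f (z j))
    (hy : ∀ i : Fin s, y i = yn + Δt •
      (∑ j ∈ Finset.Iio i, A i j • f (y j) + A i i • fε (y i)))
    (hε : ∀ i : Fin s, ‖f (y i) - fε (y i)‖ ≤ ε i)
    (hzn1 : zn1 = zn + Δt • ∑ i : Fin s, b i • f (z i))
    (hyn1 : yn1 = yn + Δt • ∑ i : Fin s, b i • f (y i)) :
    ‖zn1 - yn1‖ ^ 2 ≤ ‖zn - yn‖ ^ 2 +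
      2 * Δt ^ 2 * L * ∑ i : Fin s, ε i * b i * A i i * ‖z i - y i‖ := by
  set d : Fin s → H := fun i => f (z i) - f (y i)
  set r : Fin s → H := fun i => A i i • (f (y i) - fε (y i))
  have hstage : ∀ i, z i - y i = (zn - yn) + Δt • (∑ j, A i j • d j + r i) := by
    intro i
    have hy_full : ∑ j ∈ Iio i, A i j • f (y j) + A i i • fε (y i) =
        ∑ j, A i j • f (y j) - r i := by
      rw [← sum_Iic_smul_eq_sum_of_lowerTriangular hlow, ← sum_Iio_add_eq_sum_Iic]
      simp only [r, smul_sub]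
      abel
    rw [hz i, hy i, hy_full, sum_Iic_smul_eq_sum_of_lowerTriangular hlow]
    simp only [d, smul_sub, sum_sub_distrib]
    module
  have hout : zn1 - yn1 = (zn - yn) + Δt • ∑ i, b i • d i := by
    simp only [hzn1, hyn1, d, smul_sub, sum_sub_distrib]
    module
  have hpert : ∀ i, -(b i * ⟪r i, d i⟫) ≤ L * (ε i * b i * A i i * ‖z i - y i‖) := fun i => by
    have hgd := neg_real_inner_le_of_norm_le (hε i) (hLip (z i) (y i))
    have hbA := mul_nonneg (hb i) (hdiag i)
    simp only [r, real_inner_smul_left]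
    nlinarith
  have hstep := norm_sq_rungeKutta_step_le hb hM hΔt.le hstage fun i => hf (z i) (y i)
  have hresid :=
    mul_le_mul_of_nonneg_left (sum_le_sum (s := univ) fun i _ => hpert i) (sq_nonneg Δt)
  rw [sum_neg_distrib, ← mul_sum] at hresid
  rw [hout]
  linarith
end

section
/- In the SDIRK3 setting (2-stage DIRK with a₁₁ = a₂₂ = γ > 0, a₂₁ = 1 - 2γ, f contractive), the second-stage error satisfies ‖z⁽²⁾ - y⁽²⁾‖ ≤ (1 + 2·|a₂₁|/a₁₁)·‖zₙ - yₙ‖ + Δt·(2·|a₂₁|·ε₁ + a₂₂·ε₂), where ε₁, ε₂ bound the stage perturbations. -/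
/-!
Each stage is a perturbed implicit Euler solve `z = a + δ • f z`, `y = b + δ • g y` with
`δ = γ Δt`. Dissipativity of `f` gives
`‖z - y‖ ≤ ‖(z - y) - δ • (f z - f y)‖ = ‖(a - b) + δ • (f y - g y)‖`, so a solve does not
amplify the error of its explicit part and only adds `δ ε`. The explicit part of the second stage
carries the first-stage slope difference with weight `|1 - 2γ| / γ`, and
`δ ‖f z₁ - f y₁‖ ≤ ‖z₁ - y₁‖ + ‖zₙ - yₙ‖ + δ ε₁ ≤ 2 ‖zₙ - yₙ‖ + 2 δ ε₁`.
-/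

open scoped RealInnerProductSpace

section ImplicitEuler

variable {H : Type*} [NormedAddCommGroup H] [InnerProductSpace ℝ H]

theorem norm_le_norm_sub_smul_of_inner_nonpos {u v : H} (huv : ⟪u, v⟫ ≤ 0) {δ : ℝ}
    (hδ : 0 ≤ δ) : ‖u‖ ≤ ‖u - δ • v‖ := by
  have hsq : ‖u - δ • v‖ ^ 2 = ‖u‖ ^ 2 - 2 * (δ * ⟪u, v⟫) + ‖δ • v‖ ^ 2 := by
    rw [norm_sub_sq_real, real_inner_smul_right]
  have hcross : δ * ⟪u, v⟫ ≤ 0 := mul_nonpos_of_nonneg_of_nonpos hδ huv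
  refine (pow_le_pow_iff_left₀ (norm_nonneg _) (norm_nonneg _) two_ne_zero).1 ?_
  nlinarith [sq_nonneg ‖δ • v‖]

variable {f g : H → H} {δ ε : ℝ} {a b z y : H}

theorem sub_sub_smul_sub_of_implicit_euler (hz : z = a + δ • f z) (hy : y = b + δ • g y) :
    z - y - δ • (f z - f y) = a - b + δ • (f y - g y) :=
  calc z - y - δ • (f z - f y) = (a + δ • f z) - (b + δ • g y) - δ • (f z - f y) := by
        rw [← hz, ← hy]
    _ = a - b + δ • (f y - g y) := by module

theorem norm_sub_le_of_implicit_euler (hf : ∀ x y : H, ⟪x - y, f x - f y⟫ ≤ 0) (hδ : 0 ≤ δ)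
    (hz : z = a + δ • f z) (hy : y = b + δ • g y) (hε : ‖f y - g y‖ ≤ ε) :
    ‖z - y‖ ≤ ‖a - b‖ + δ * ε :=
  calc ‖z - y‖ ≤ ‖z - y - δ • (f z - f y)‖ := norm_le_norm_sub_smul_of_inner_nonpos (hf z y) hδ
    _ = ‖a - b + δ • (f y - g y)‖ := by rw [sub_sub_smul_sub_of_implicit_euler hz hy]
    _ ≤ ‖a - b‖ + δ * ε := by
      grw [norm_add_le, norm_smul, Real.norm_of_nonneg hδ, hε]

theorem mul_norm_sub_le_of_implicit_euler (hf : ∀ x y : H, ⟪x - y, f x - f y⟫ ≤ 0)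
    (hδ : 0 ≤ δ) (hz : z = a + δ • f z) (hy : y = b + δ • g y) (hε : ‖f y - g y‖ ≤ ε) :
    δ * ‖f z - f y‖ ≤ 2 * ‖a - b‖ + 2 * δ * ε := by
  have hslope : δ • (f z - f y) = (z - y) - (a - b) - δ • (f y - g y) := by
    rw [sub_sub (z - y), ← sub_sub_smul_sub_of_implicit_euler hz hy]; abel
  have hstep := norm_sub_le_of_implicit_euler hf hδ hz hy hε
  calc δ * ‖f z - f y‖ = ‖(z - y) - (a - b) - δ • (f y - g y)‖ := by
        rw [← hslope, norm_smul, Real.norm_of_nonneg hδ]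
    _ ≤ ‖z - y‖ + ‖a - b‖ + δ * ε := by
      grw [norm_sub_le, norm_sub_le, norm_smul, Real.norm_of_nonneg hδ, hε]
    _ ≤ 2 * ‖a - b‖ + 2 * δ * ε := by linarith

end ImplicitEuler

theorem sdirk3_second_stage_error_bound
    {H : Type*} [NormedAddCommGroup H] [InnerProductSpace ℝ H]
    (f fε : H → H) (hf : ∀ x y : H, ⟪x - y, f x - f y⟫ ≤ 0)
    (γ Δt ε₁ ε₂ : ℝ) (hγ : 0 < γ) (hΔt : 0 < Δt)
    (zn yn z1 z2 y1 y2 : H)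
    (hz1 : z1 = zn + (γ * Δt) • f z1)
    (hz2 : z2 = zn + ((1 - 2 * γ) * Δt) • f z1 + (γ * Δt) • f z2)
    (hy1 : y1 = yn + (γ * Δt) • fε y1)
    (hy2 : y2 = yn + ((1 - 2 * γ) * Δt) • f y1 + (γ * Δt) • fε y2)
    (hε1 : ‖f y1 - fε y1‖ ≤ ε₁)
    (hε2 : ‖f y2 - fε y2‖ ≤ ε₂) :
    ‖z2 - y2‖ ≤ (1 + 2 * |1 - 2 * γ| / γ) * ‖zn - yn‖ +
      Δt * (2 * |1 - 2 * γ| * ε₁ + γ * ε₂) := by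
  have hδ : 0 ≤ γ * Δt := by positivity
  have hslope := mul_norm_sub_le_of_implicit_euler hf hδ hz1 hy1 hε1
  have hexplicit : ‖zn + ((1 - 2 * γ) * Δt) • f z1 - (yn + ((1 - 2 * γ) * Δt) • f y1)‖ ≤
      ‖zn - yn‖ + |1 - 2 * γ| / γ * (γ * Δt * ‖f z1 - f y1‖) :=
    calc _ = ‖zn - yn + ((1 - 2 * γ) * Δt) • (f z1 - f y1)‖ := by congr 1; module
      _ ≤ ‖zn - yn‖ + |(1 - 2 * γ) * Δt| * ‖f z1 - f y1‖ := by
        grw [norm_add_le, norm_smul, Real.norm_eq_abs]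
      _ = _ := by rw [abs_mul, abs_of_pos hΔt]; field_simp
  grw [norm_sub_le_of_implicit_euler hf hδ hz2 hy2 hε2, hexplicit, hslope]
  apply le_of_eq
  field_simp
  ring
end
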